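/- arXiv:1001.3223 — 3 statements merged into one kernel-verified Lean document; each statement's English description precedes it below -/
import Mathlib

section
/- For K > 0 and z ∈ ℂ with Im(z) > 1, the Fourier transform of the call payoff f(x) = max(e^x − K, 0) is given by ∫_ℝ e^{izx} f(x) dx = K^{1+iz} / (iz(1+iz)), where K^{1+iz} = e^{(1+iz) log K}. -/
/-!
On `x ≤ log K` the payoff vanishes, and on `x > log K` the integrand is
`e^{(1+c)x} − K e^{cx}` with `c = iz`; both exponentials decay because `Re c = −Im z < −1`,
so the integral is `−K^{1+c}/(1+c) + K · K^c / c = K^{1+c}/(c(1+c))`.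
-/

open MeasureTheory Set

lemma Complex.exp_mul_ofReal_log_eq_cpow {K : ℝ} (hK : 0 < K) (w : ℂ) :
    Complex.exp (w * Real.log K) = (K : ℂ) ^ w := by
  rw [Complex.cpow_def_of_ne_zero (by exact_mod_cast hK.ne'), ← Complex.ofReal_log hK.le,
    mul_comm]

lemma cexp_mul_max_exp_sub_eq_zero {K x : ℝ} (hK : 0 < K) (hx : x ≤ Real.log K) (c : ℂ) :
    Complex.exp (c * x) * (max (Real.exp x - K) 0 : ℝ) = 0 := by
  have : Real.exp x ≤ K := (Real.le_log_iff_exp_le hK).mp hx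
  simp [max_eq_right (sub_nonpos.mpr this)]

lemma cexp_mul_max_exp_sub_eq {K x : ℝ} (hK : 0 < K) (hx : Real.log K < x) (c : ℂ) :
    Complex.exp (c * x) * (max (Real.exp x - K) 0 : ℝ)
      = Complex.exp ((1 + c) * x) - K * Complex.exp (c * x) := by
  have : K ≤ Real.exp x := ((Real.log_lt_iff_lt_exp hK).mp hx).le
  rw [max_eq_left (sub_nonneg.mpr this), add_mul, one_mul, Complex.exp_add]
  push_cast
  ring

theorem integral_cexp_mul_max_exp_sub {K : ℝ} (hK : 0 < K) {c : ℂ} (hc : c.re < -1) :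
    ∫ x : ℝ, Complex.exp (c * x) * (max (Real.exp x - K) 0 : ℝ)
      = (K : ℂ) ^ (1 + c) / (c * (1 + c)) := by
  have hc₀ : c.re < 0 := by linarith
  have hc₁ : (1 + c).re < 0 := by simp; linarith
  have hc_ne : c ≠ 0 := fun h => by simp [h] at hc₀
  have hc₁_ne : 1 + c ≠ 0 := fun h => by simp [h] at hc₁
  rw [← setIntegral_eq_integral_of_forall_compl_eq_zero (s := Ioi (Real.log K))
      fun x hx => cexp_mul_max_exp_sub_eq_zero hK (not_lt.mp hx) c,
    setIntegral_congr_fun measurableSet_Ioi fun x hx => cexp_mul_max_exp_sub_eq hK hx c,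
    integral_sub (integrableOn_exp_mul_complex_Ioi hc₁ _)
      ((integrableOn_exp_mul_complex_Ioi hc₀ _).const_mul _),
    integral_const_mul, integral_exp_mul_complex_Ioi hc₁, integral_exp_mul_complex_Ioi hc₀,
    Complex.exp_mul_ofReal_log_eq_cpow hK, Complex.exp_mul_ofReal_log_eq_cpow hK,
    Complex.cpow_add _ _ (by exact_mod_cast hK.ne'), Complex.cpow_one]
  field_simp
  ring

/-- For `K > 0` and `z ∈ ℂ` with `Im z > 1`, the Fourier transform of the call payoff
`f(x) = (e^x − K)⁺` is `∫ e^{izx} f(x) dx = K^{1+iz}/(iz(1+iz))`. -/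
theorem stmt_13 (K : ℝ) (hK : 0 < K) (z : ℂ) (hz : 1 < z.im) :
    ∫ x : ℝ, Complex.exp (Complex.I * z * x) * (max (Real.exp x - K) 0 : ℝ)
      = (K : ℂ) ^ (1 + Complex.I * z) / (Complex.I * z * (1 + Complex.I * z)) :=
  integral_cexp_mul_max_exp_sub hK (by simpa using hz)
end

section
/- For K > 0 and z = (z₁, z₂) ∈ ℂ² with Im(z₁) < 0 and Im(z₂) < 0, the Fourier transform of the two-asset basket put payoff f(x₁, x₂) = max(K − e^{x₁} − e^{x₂}, 0) equals ∫_{ℝ²} e^{i⟨z, x⟩} f(x) dx = K^{1 + i(z₁+z₂)} · Γ(iz₁) Γ(iz₂) / Γ(2 + i(z₁+z₂)). -/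
/-!
Writing `wⱼ = i zⱼ` (so `Re wⱼ > 0`), integrate first in `x₂`. The substitution `u = eˣ` turns
`∫ e^{w x} (C - eˣ)₊^{s-1} dx` into the Mellin transform of the truncated power `(C - u)₊^{s-1}`,
which is the scaled Beta integral `C^{w+s-1} B(w, s)`. With `s = 2` this evaluates the inner
integral as `e^{w₁ x₁} (K - e^{x₁})₊^{w₂+1} B(w₂, 2)`; with `s = w₂ + 2` the outer one becomes
`K^{w₁+w₂+1} B(w₁, w₂ + 2) B(w₂, 2) = K^{w₁+w₂+1} Γ(w₁) Γ(w₂) Γ(2) / Γ(w₁ + w₂ + 2)`.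
Fubini applies because the integrand is bounded by `K e^{Re w₁ x₁} e^{Re w₂ x₂}` on
`(-∞, log K]²` and vanishes outside it.
-/

open MeasureTheory Set Complex

noncomputable def basketPut (K : ℝ) (x : ℝ × ℝ) : ℝ := max (K - Real.exp x.1 - Real.exp x.2) 0

theorem integral_cexp_mul_smul_comp_exp_eq_mellin {E : Type*} [NormedAddCommGroup E]
    [NormedSpace ℂ E] (f : ℝ → E) (w : ℂ) :
    ∫ x : ℝ, cexp (w * x) • f (Real.exp x) = mellin f w := by
  rw [mellin, ← Real.range_exp, ← image_univ, integral_image_eq_integral_abs_deriv_smul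
    MeasurableSet.univ (fun x _ => (Real.hasDerivAt_exp x).hasDerivWithinAt)
    Real.exp_injective.injOn, setIntegral_univ]
  congr 1 with x
  rw [abs_of_pos (Real.exp_pos x), ← smul_assoc, Complex.ofReal_exp,
    cpow_def_of_ne_zero (Complex.exp_ne_zero _),
    Complex.log_exp (by simp [Real.pi_pos]) (by simp [Real.pi_pos.le]), real_smul,
    Complex.ofReal_exp, ← Complex.exp_add]
  ring_nf

theorem mellin_posPart_sub_cpow_of_nonpos {C : ℝ} (hC : C ≤ 0) {s : ℂ} (hs : s ≠ 1) (w : ℂ) :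
    mellin (fun u : ℝ => ((max (C - u) 0 : ℝ) : ℂ) ^ (s - 1)) w = 0 := by
  rw [mellin, ← integral_zero ℝ ℂ]
  refine setIntegral_congr_fun measurableSet_Ioi fun u (hu : 0 < u) => ?_
  rw [max_eq_right (by linarith), ofReal_zero, zero_cpow (sub_ne_zero.mpr hs), smul_zero]

theorem mellin_posPart_sub_cpow {C : ℝ} (hC : 0 < C) {s : ℂ} (hs : s ≠ 1) (w : ℂ) :
    mellin (fun u : ℝ => ((max (C - u) 0 : ℝ) : ℂ) ^ (s - 1)) w
      = (C : ℂ) ^ (w + s - 1) * betaIntegral w s := by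
  have hsupp : ∀ u ∈ Ioi (0 : ℝ), (u : ℂ) ^ (w - 1) • ((max (C - u) 0 : ℝ) : ℂ) ^ (s - 1)
      = (Ioc 0 C).indicator (fun u : ℝ => (u : ℂ) ^ (w - 1) * ((C : ℂ) - u) ^ (s - 1)) u := by
    intro u (hu : 0 < u)
    rcases le_or_gt u C with huC | huC
    · rw [indicator_of_mem (show u ∈ Ioc 0 C from ⟨hu, huC⟩), max_eq_left (by linarith),
        smul_eq_mul, ofReal_sub]
    · rw [indicator_of_notMem (fun h => huC.not_ge h.2), max_eq_right (by linarith), ofReal_zero,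
        zero_cpow (sub_ne_zero.mpr hs), smul_zero]
  rw [mellin, setIntegral_congr_fun measurableSet_Ioi hsupp,
    setIntegral_indicator measurableSet_Ioc, inter_eq_self_of_subset_right Ioc_subset_Ioi_self,
    ← intervalIntegral.integral_of_le hC.le, betaIntegral_scaled w s hC]

theorem integral_cexp_mul_posPart_sub_exp_cpow (C : ℝ) {w s : ℂ} (hs : s ≠ 1)
    (hws : w + s - 1 ≠ 0) :
    ∫ x : ℝ, cexp (w * x) * ((max (C - Real.exp x) 0 : ℝ) : ℂ) ^ (s - 1)
      = ((max C 0 : ℝ) : ℂ) ^ (w + s - 1) * betaIntegral w s := by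
  refine (integral_cexp_mul_smul_comp_exp_eq_mellin
    (fun u : ℝ => ((max (C - u) 0 : ℝ) : ℂ) ^ (s - 1)) w).trans ?_
  rcases le_or_gt C 0 with hC | hC
  · rw [mellin_posPart_sub_cpow_of_nonpos hC hs, max_eq_right hC, ofReal_zero, zero_cpow hws,
      zero_mul]
  · rw [mellin_posPart_sub_cpow hC hs, max_eq_left hC.le]

theorem betaIntegral_mul_betaIntegral {u v t : ℂ} (hu : 0 < u.re) (hv : 0 < v.re)
    (ht : 0 < t.re) :
    betaIntegral u (v + t) * betaIntegral v t
      = Gamma u * Gamma v * Gamma t / Gamma (u + (v + t)) := by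
  have hvt : 0 < (v + t).re := by rw [add_re]; positivity
  rw [betaIntegral_eq_Gamma_mul_div u _ hu hvt, betaIntegral_eq_Gamma_mul_div v t hv ht]
  field_simp [Gamma_ne_zero_of_re_pos hvt]

theorem integrable_cexp_mul_basketPut {K : ℝ} (hK : 0 < K) {w₁ w₂ : ℂ} (h₁ : 0 < w₁.re)
    (h₂ : 0 < w₂.re) :
    Integrable (fun x : ℝ × ℝ => cexp (w₁ * x.1) * (cexp (w₂ * x.2) * (basketPut K x : ℂ)))
      (volume.prod volume) := by
  set g : ℂ → ℝ → ℂ := fun w => (Iic (Real.log K)).indicator fun t => cexp (w * t)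
  have hg : ∀ w : ℂ, 0 < w.re → Integrable (g w) := fun w hw =>
    (integrable_indicator_iff measurableSet_Iic).mpr (integrableOn_exp_mul_complex_Iic hw _)
  refine (((hg w₁ h₁).mul_prod (hg w₂ h₂)).const_mul K).mono (by unfold basketPut; fun_prop)
    (ae_of_all _ ?_)
  rintro ⟨x, y⟩
  rcases le_or_gt (K - Real.exp x - Real.exp y) 0 with hle | hlt
  · simp only [basketPut, max_eq_right hle, ofReal_zero, mul_zero, norm_zero]
    positivity
  have hx : x ∈ Iic (Real.log K) :=
    (Real.le_log_iff_exp_le hK).mpr (by linarith [Real.exp_pos y])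
  have hy : y ∈ Iic (Real.log K) :=
    (Real.le_log_iff_exp_le hK).mpr (by linarith [Real.exp_pos x])
  simp only [g, basketPut, indicator_of_mem hx, indicator_of_mem hy, norm_mul, norm_real,
    Real.norm_eq_abs, abs_of_pos hK, max_eq_left hlt.le, abs_of_pos hlt]
  rw [← mul_assoc, mul_comm K]
  gcongr
  linarith [Real.exp_pos x, Real.exp_pos y]

theorem integral_cexp_mul_basketPut {K : ℝ} (hK : 0 < K) {w₁ w₂ : ℂ} (h₁ : 0 < w₁.re)
    (h₂ : 0 < w₂.re) :
    ∫ x : ℝ × ℝ, cexp (w₁ * x.1) * (cexp (w₂ * x.2) * (basketPut K x : ℂ))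
      = (K : ℂ) ^ (w₁ + w₂ + 1) * Gamma w₁ * Gamma w₂ / Gamma (w₁ + w₂ + 2) := by
  have hs : w₂ + 2 ≠ 1 := fun h => by
    have := congrArg re h
    simp only [add_re, re_ofNat, one_re] at this
    linarith
  have hws₂ : w₂ + 2 - 1 ≠ 0 :=
    ne_zero_of_re_pos (by simp only [sub_re, add_re, re_ofNat, one_re]; linarith)
  have hws₁ : w₁ + (w₂ + 2) - 1 ≠ 0 :=
    ne_zero_of_re_pos (by simp only [sub_re, add_re, re_ofNat, one_re]; linarith)
  have hinner (x : ℝ) :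
      ∫ y : ℝ, cexp (w₁ * x) * (cexp (w₂ * y) * (basketPut K (x, y) : ℂ))
        = cexp (w₁ * x) * ((max (K - Real.exp x) 0 : ℝ) : ℂ) ^ (w₂ + 2 - 1)
          * betaIntegral w₂ 2 := by
    have h := integral_cexp_mul_posPart_sub_exp_cpow (K - Real.exp x) (s := 2) (by norm_num) hws₂
    rw [show (2 : ℂ) - 1 = 1 by norm_num] at h
    simp only [cpow_one] at h
    rw [integral_const_mul, mul_assoc, ← h]
    rfl
  rw [Measure.volume_eq_prod, integral_prod _ (integrable_cexp_mul_basketPut hK h₁ h₂)]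
  simp_rw [hinner, integral_mul_const]
  rw [integral_cexp_mul_posPart_sub_exp_cpow K hs hws₁, mul_assoc,
    betaIntegral_mul_betaIntegral h₁ h₂ (by norm_num), (by simp : Gamma 2 = 1),
    max_eq_left hK.le]
  ring_nf

/-- For `K > 0` and `z = (z₁, z₂) ∈ ℂ²` with `Im z₁ < 0`, `Im z₂ < 0`, the Fourier transform of
the two-asset basket put payoff `f(x₁, x₂) = (K − e^{x₁} − e^{x₂})⁺` is
`K^{1+i(z₁+z₂)} Γ(iz₁) Γ(iz₂) / Γ(2 + i(z₁+z₂))`. -/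
theorem stmt_14 (K : ℝ) (hK : 0 < K) (z₁ z₂ : ℂ) (h₁ : z₁.im < 0) (h₂ : z₂.im < 0) :
    ∫ x : ℝ × ℝ, Complex.exp (Complex.I * (z₁ * x.1 + z₂ * x.2)) *
        (max (K - Real.exp x.1 - Real.exp x.2) 0 : ℝ)
      = (K : ℂ) ^ (1 + Complex.I * (z₁ + z₂)) *
          Complex.Gamma (Complex.I * z₁) * Complex.Gamma (Complex.I * z₂) /
          Complex.Gamma (2 + Complex.I * (z₁ + z₂)) := by
  have hw₁ : 0 < (I * z₁).re := by simpa using neg_pos.mpr h₁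
  have hw₂ : 0 < (I * z₂).re := by simpa using neg_pos.mpr h₂
  have hsplit (x : ℝ × ℝ) : cexp (I * (z₁ * x.1 + z₂ * x.2)) * (basketPut K x : ℂ)
      = cexp (I * z₁ * x.1) * (cexp (I * z₂ * x.2) * (basketPut K x : ℂ)) := by
    rw [← mul_assoc, ← Complex.exp_add]
    ring_nf
  convert integral_cexp_mul_basketPut hK hw₁ hw₂ using 1
  · exact integral_congr_ae (ae_of_all _ hsplit)
  · ring_nf
end

section
/- Let a₁, a₂ < 0, λ > 0, n > 0, Σ₀¹² ∈ ℝ, Θ₁₂ ∈ ℝ, and define m(T) as the (1,2) entry of 𝐀⁻¹[ e^{AT}(Σ₀ + 𝐀⁻¹(C)) e^{AᵀT} − 𝐀⁻¹(C) − T·C − Σ₀ ] where A = diag(a₁, a₂), C is a symmetric matrix with off-diagonal entry C₁₂ = λ n Θ₁₂, and 𝐀(X) = AX + XAᵀ. Then m(T) = (1/(a₁+a₂)) [ (e^{(a₁+a₂)T} − 1)(Σ₀¹² + λ n Θ₁₂/(a₁+a₂)) − T λ n Θ₁₂ ]. -/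
open Matrix NormedSpace

/-! The operator `𝐀(X) = D X + X Dᵀ` with `D = diagonal d` acts on the `(i, j)` entry as
multiplication by `d i + d j`, so `𝐀⁻¹` divides that entry by `d i + d j` (nonzero because `𝐀`
is invertible), while `exp (T • D)` is diagonal with entries `e^{T d i}`. The `(0, 1)` entry of
the expression is therefore an explicit scalar computation. -/

namespace Matrix

variable {ι : Type*} [Fintype ι] [DecidableEq ι]

theorem diagonal_mul_add_mul_transpose_apply (d : ι → ℝ) (X : Matrix ι ι ℝ) (i j : ι) :
    (diagonal d * X + X * (diagonal d)ᵀ) i j = (d i + d j) * X i j := by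
  rw [diagonal_transpose, add_apply, diagonal_mul, mul_diagonal]
  ring

theorem exp_smul_diagonal (T : ℝ) (d : ι → ℝ) :
    exp (T • diagonal d) = diagonal fun i => Real.exp (T * d i) := by
  rw [← diagonal_smul, exp_diagonal]
  congr 1
  ext i
  simp [Real.exp_eq_exp_ℝ]

section Lyapunov

variable {d : ι → ℝ} {e : Matrix ι ι ℝ ≃ₗ[ℝ] Matrix ι ι ℝ}

theorem add_mul_lyapunov_symm_apply
    (he : ∀ X, e X = diagonal d * X + X * (diagonal d)ᵀ) (Y : Matrix ι ι ℝ) (i j : ι) :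
    (d i + d j) * e.symm Y i j = Y i j := by
  rw [← diagonal_mul_add_mul_transpose_apply, ← he, e.apply_symm_apply]

theorem add_ne_zero_of_lyapunov
    (he : ∀ X, e X = diagonal d * X + X * (diagonal d)ᵀ) (i j : ι) : d i + d j ≠ 0 :=
  left_ne_zero_of_mul_eq_one <| by
    simpa using add_mul_lyapunov_symm_apply he (single i j 1) i j

theorem lyapunov_symm_apply
    (he : ∀ X, e X = diagonal d * X + X * (diagonal d)ᵀ) (Y : Matrix ι ι ℝ) (i j : ι) :
    e.symm Y i j = Y i j / (d i + d j) := by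
  rw [eq_div_iff (add_ne_zero_of_lyapunov he i j), mul_comm,
    add_mul_lyapunov_symm_apply he]

end Lyapunov

end Matrix

theorem stmt_19_general (a₁ a₂ lam n σ₁₂ Θ₁₂ : ℝ)
    (S₀ C : Matrix (Fin 2) (Fin 2) ℝ)
    (hS₀12 : S₀ 0 1 = σ₁₂) (hC12 : C 0 1 = lam * n * Θ₁₂)
    (e : Matrix (Fin 2) (Fin 2) ℝ ≃ₗ[ℝ] Matrix (Fin 2) (Fin 2) ℝ)
    (he : ∀ X, e X = diagonal ![a₁, a₂] * X + X * (diagonal ![a₁, a₂])ᵀ)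
    (T : ℝ) :
    (e.symm (exp (T • diagonal ![a₁, a₂]) * (S₀ + e.symm C) *
        exp (T • (diagonal ![a₁, a₂])ᵀ) - e.symm C - T • C - S₀)) 0 1
      = (1 / (a₁ + a₂)) * ((Real.exp ((a₁ + a₂) * T) - 1) *
          (σ₁₂ + lam * n * Θ₁₂ / (a₁ + a₂)) - T * (lam * n * Θ₁₂)) := by
  have hs : a₁ + a₂ ≠ 0 := add_ne_zero_of_lyapunov he 0 1
  have hexp : Real.exp (T * a₁) * Real.exp (T * a₂) = Real.exp (T * (a₁ + a₂)) := by
    rw [← Real.exp_add, mul_add]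
  rw [mul_comm (a₁ + a₂) T]
  simp only [lyapunov_symm_apply he, diagonal_transpose, exp_smul_diagonal, Matrix.sub_apply,
    mul_diagonal, diagonal_mul, Matrix.add_apply, Matrix.smul_apply, hS₀12, hC12,
    cons_val_zero, cons_val_one, smul_eq_mul]
  field_simp
  linear_combination (σ₁₂ * (a₁ + a₂) + lam * n * Θ₁₂) * hexp

/-- The (1,2) entry of the continuous part of the covariance swap rate in the 2-dimensional
OU-Wishart model: with `A = diag(a₁, a₂)`, `𝐀(X) = AX + XAᵀ` (invertible, inverse `e.symm`),
`Σ₀` symmetric with `(Σ₀)₁₂ = σ₁₂` and `C` symmetric with `C₁₂ = λnΘ₁₂`, the (1,2) entry of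
`𝐀⁻¹[e^{AT}(Σ₀ + 𝐀⁻¹C)e^{AᵀT} − 𝐀⁻¹C − T·C − Σ₀]` equals
`(1/(a₁+a₂))[(e^{(a₁+a₂)T} − 1)(σ₁₂ + λnΘ₁₂/(a₁+a₂)) − TλnΘ₁₂]`. -/
theorem stmt_19 (a₁ a₂ lam n σ₁₂ Θ₁₂ : ℝ) (h₁ : a₁ < 0) (h₂ : a₂ < 0)
    (hlam : 0 < lam) (hn : 0 < n)
    (S₀ C : Matrix (Fin 2) (Fin 2) ℝ) (hS₀ : S₀.IsSymm) (hC : C.IsSymm)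
    (hS₀12 : S₀ 0 1 = σ₁₂) (hC12 : C 0 1 = lam * n * Θ₁₂)
    (e : Matrix (Fin 2) (Fin 2) ℝ ≃ₗ[ℝ] Matrix (Fin 2) (Fin 2) ℝ)
    (he : ∀ X, e X = diagonal ![a₁, a₂] * X + X * (diagonal ![a₁, a₂])ᵀ)
    (T : ℝ) :
    (e.symm (exp (T • diagonal ![a₁, a₂]) * (S₀ + e.symm C) *
        exp (T • (diagonal ![a₁, a₂])ᵀ) - e.symm C - T • C - S₀)) 0 1
      = (1 / (a₁ + a₂)) * ((Real.exp ((a₁ + a₂) * T) - 1) *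
          (σ₁₂ + lam * n * Θ₁₂ / (a₁ + a₂)) - T * (lam * n * Θ₁₂)) :=
  stmt_19_general a₁ a₂ lam n σ₁₂ Θ₁₂ S₀ C hS₀12 hC12 e he T
end
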